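/- The following are equivalent: (c₆) 𝒩₆ := co cone(𝒱 ∪ {(0_{X*},1)}) is a closed subset of X*×ℝ (weak*-topology on X* times the usual topology on ℝ); (d₆) for every c ∈ X* with inf(RLIP_c) > −∞ there exists λ̄ ∈ ℝ₊^{(𝒱)} such that c = −∑_{v∈supp λ̄} λ̄_v v¹ and −∑_{v∈supp λ̄} λ̄_v v² = inf(RLIP_c) (stable robust strong duality for the pair (RLIP_c)–(RLID⁶_c)). -/

import Mathlib

/-!
The inequalities `⟨x*, x⟩ ≤ r` valid on the feasible set `F` are exactly the points of the
closure of `𝒩₆`. Points of `𝒩₆` are valid by weak duality. Conversely, a valid `(c, α)` outside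
a closed `𝒩₆` is separated from it by a weak*-continuous functional, which has the form
`(x*, r) ↦ s r - ⟨x*, y⟩` with `s ≥ 0` and `⟨x*, y⟩ ≤ s r` on `𝒩₆`; then `y / s` (if `s > 0`)
or a ray `x₀ + t y` in `F` (if `s = 0`) violates `⟨c, x⟩ ≤ α`. Stable strong duality says that
`(-c, -inf (RLIP_c))` lies in `𝒩₆` itself, so both conditions amount to `closure 𝒩₆ ⊆ 𝒩₆`.
-/

open Pointwise

variable {X : Type*} [AddCommGroup X] [Module ℝ X] [TopologicalSpace X]
  [IsTopologicalAddGroup X] [ContinuousSMul ℝ X] [LocallyConvexSpace ℝ X] [T2Space X]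
  {T : Type*}

/-- The cone generated by a set `A`: `cone A = {λa : λ ≥ 0, a ∈ A}`. -/
def coneSet {E : Type*} [SMul ℝ E] (A : Set E) : Set E :=
  {p | ∃ l : ℝ, 0 ≤ l ∧ ∃ a ∈ A, p = l • a}

/-- The optimal value of the robust primal problem (RLIP_c). -/
noncomputable def infRLIP (U : T → Set (WeakDual ℝ X × ℝ)) (c : WeakDual ℝ X) : EReal :=
  ⨅ x : {x : X | ∀ t, ∀ v ∈ U t, v.1 x ≤ v.2}, ((c x.1 : ℝ) : EReal)

section ConeHull

variable {E : Type*} [AddCommGroup E] [Module ℝ E] {A : Set E}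

lemma smul_mem_convexHull_coneSet {l : ℝ} (hl : 0 ≤ l) {p : E}
    (hp : p ∈ convexHull ℝ (coneSet A)) : l • p ∈ convexHull ℝ (coneSet A) := by
  have h : l • p ∈ convexHull ℝ (l • coneSet A) := by
    rw [convexHull_smul]
    exact Set.smul_mem_smul_set hp
  refine convexHull_mono ?_ h
  rintro _ ⟨_, ⟨l', hl', a, ha, rfl⟩, rfl⟩
  exact ⟨l * l', mul_nonneg hl hl', a, ha, smul_smul l l' a⟩

lemma add_mem_convexHull_coneSet {p q : E} (hp : p ∈ convexHull ℝ (coneSet A))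
    (hq : q ∈ convexHull ℝ (coneSet A)) : p + q ∈ convexHull ℝ (coneSet A) := by
  have hmid : (1 / 2 : ℝ) • p + (1 / 2 : ℝ) • q ∈ convexHull ℝ (coneSet A) :=
    convex_convexHull ℝ _ hp hq (by norm_num) (by norm_num) (by norm_num)
  convert smul_mem_convexHull_coneSet (by norm_num : (0 : ℝ) ≤ 2) hmid using 1
  module

theorem convexHull_coneSet_union_singleton (e : E) :
    convexHull ℝ (coneSet (A ∪ {e})) = {p | ∃ μ : A →₀ ℝ, (∀ a, 0 ≤ μ a) ∧
      ∃ β : ℝ, 0 ≤ β ∧ p = Finsupp.linearCombination ℝ Subtype.val μ + β • e} := by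
  refine subset_antisymm (convexHull_min ?_ ?_) ?_
  · rintro _ ⟨l, hl, a, ha | rfl, rfl⟩
    · refine ⟨Finsupp.single ⟨a, ha⟩ l, fun b => ?_, 0, le_rfl, by simp⟩
      classical
      rw [Finsupp.single_apply]
      split_ifs <;> simp [hl]
    · exact ⟨0, fun _ => le_rfl, l, hl, by simp⟩
  · rintro _ ⟨μ, hμ, β, hβ, rfl⟩ _ ⟨ν, hν, γ, hγ, rfl⟩ s t hs ht -
    refine ⟨s • μ + t • ν, fun a => ?_, s * β + t * γ, by positivity, ?_⟩
    · simpa using add_nonneg (mul_nonneg hs (hμ a)) (mul_nonneg ht (hν a))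
    · simp only [map_add, map_smul]
      module
  · rintro _ ⟨μ, hμ, β, hβ, rfl⟩
    have he : e ∈ coneSet (A ∪ {e}) := ⟨1, zero_le_one, e, Or.inr rfl, (one_smul ℝ e).symm⟩
    refine add_mem_convexHull_coneSet ?_
      (smul_mem_convexHull_coneSet hβ (subset_convexHull ℝ _ he))
    rw [Finsupp.linearCombination_apply, Finsupp.sum]
    exact Finset.sum_induction _ (· ∈ _) (fun _ _ => add_mem_convexHull_coneSet)
      (subset_convexHull ℝ _ ⟨0, le_rfl, e, Or.inr rfl, (zero_smul ℝ e).symm⟩)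
      fun a _ => subset_convexHull ℝ _ ⟨μ a, hμ a, a, Or.inl a.2, rfl⟩

end ConeHull

/-- The characteristic cone `𝒩₆` of the linear system `A`. -/
def charCone {F : Type*} [AddCommGroup F] [Module ℝ F] (A : Set (F × ℝ)) : Set (F × ℝ) :=
  convexHull ℝ (coneSet (A ∪ {((0 : F), (1 : ℝ))}))

lemma mem_charCone_iff {F : Type*} [AddCommGroup F] [Module ℝ F] {A : Set (F × ℝ)}
    {p : F × ℝ} : p ∈ charCone A ↔ ∃ μ : A →₀ ℝ, (∀ a, 0 ≤ μ a) ∧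
      p.1 = (μ.sum fun a r => r • (a : F × ℝ).1) ∧ (μ.sum fun a r => r * (a : F × ℝ).2) ≤ p.2 := by
  have hsplit (μ : A →₀ ℝ) : Finsupp.linearCombination ℝ Subtype.val μ =
      ((μ.sum fun a r => r • (a : F × ℝ).1), (μ.sum fun a r => r * (a : F × ℝ).2)) := by
    ext <;> simp [Finsupp.linearCombination_apply, Finsupp.sum, Prod.fst_sum, Prod.snd_sum]
  rw [charCone, convexHull_coneSet_union_singleton]
  refine exists_congr fun μ => and_congr_right fun _ => ?_
  rw [hsplit]
  constructor
  · rintro ⟨β, hβ, rfl⟩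
    simpa using hβ
  · rintro ⟨h1, h2⟩
    exact ⟨_, sub_nonneg.2 h2, Prod.ext (by simpa using h1) (by simp)⟩

section LinearSystem

variable {E : Type*} [AddCommGroup E] [Module ℝ E] [TopologicalSpace E]

def solutionSet (K : Set (WeakDual ℝ E × ℝ)) : Set E :=
  {x | ∀ p ∈ K, p.1 x ≤ p.2}

lemma solutionSet_anti {K L : Set (WeakDual ℝ E × ℝ)} (h : K ⊆ L) :
    solutionSet L ⊆ solutionSet K :=
  fun _ hx p hp => hx p (h hp)

lemma solutionSet_closure (K : Set (WeakDual ℝ E × ℝ)) :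
    solutionSet (closure K) = solutionSet K := by
  refine subset_antisymm (solutionSet_anti subset_closure) fun x hx => ?_
  have hclosed : IsClosed {p : WeakDual ℝ E × ℝ | p.1 x ≤ p.2} :=
    isClosed_le ((WeakDual.eval_continuous x).comp continuous_fst) continuous_snd
  exact fun p hp => closure_minimal hx hclosed hp

lemma WeakDual.neg_apply (φ : WeakDual ℝ E) (x : E) : (-φ) x = -φ x := rfl

lemma WeakDual.finsuppSum_apply {ι : Type*} (μ : ι →₀ ℝ) (φ : ι → WeakDual ℝ E) (x : E) :
    (μ.sum fun i r => r • φ i) x = μ.sum fun i r => r * φ i x := by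
  let evalAt : WeakDual ℝ E →ₗ[ℝ] ℝ :=
    { toFun := fun ψ => ψ x, map_add' := fun _ _ => rfl, map_smul' := fun _ _ => rfl }
  exact (map_finsuppSum evalAt μ _).trans (Finsupp.sum_congr fun i _ => map_smul evalAt _ _)

lemma solutionSet_charCone (A : Set (WeakDual ℝ E × ℝ)) :
    solutionSet (charCone A) = solutionSet A := by
  refine subset_antisymm
    (solutionSet_anti fun a ha => subset_convexHull ℝ _ ⟨1, zero_le_one, a, Or.inl ha, by simp⟩)
    fun x hx p hp => ?_
  obtain ⟨μ, hμ, h1, h2⟩ := mem_charCone_iff.1 hp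
  calc p.1 x = μ.sum fun a r => r * (a : WeakDual ℝ E × ℝ).1 x := by
        rw [h1, WeakDual.finsuppSum_apply]
    _ ≤ μ.sum fun a r => r * (a : WeakDual ℝ E × ℝ).2 :=
        Finset.sum_le_sum fun a _ => mul_le_mul_of_nonneg_left (hx a a.2) (hμ a)
    _ ≤ p.2 := h2

lemma exists_mem_solutionSet_lt {K : Set (WeakDual ℝ E × ℝ)} (hK : (solutionSet K).Nonempty)
    {y : E} {s : ℝ} (hs : 0 ≤ s) (hy : ∀ p ∈ K, p.1 y ≤ s * p.2) {c : WeakDual ℝ E} {α : ℝ}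
    (hc : s * α < c y) : ∃ x ∈ solutionSet K, α < c x := by
  rcases hs.eq_or_lt with rfl | hs
  · -- `y` is a recession direction of the solution set along which `c` increases
    obtain ⟨x₀, hx₀⟩ := hK
    rw [zero_mul] at hc
    set t := (|α - c x₀| + 1) / c y
    have ht : t * c y = |α - c x₀| + 1 := div_mul_cancel₀ _ hc.ne'
    refine ⟨x₀ + t • y, fun p hp => ?_, ?_⟩
    · have := hy p hp
      have := hx₀ p hp
      rw [map_add, map_smul, smul_eq_mul]
      nlinarith [div_nonneg (by positivity : (0 : ℝ) ≤ |α - c x₀| + 1) hc.le]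
    · rw [map_add, map_smul, smul_eq_mul, ht]
      linarith [le_abs_self (α - c x₀)]
  · refine ⟨s⁻¹ • y, fun p hp => ?_, ?_⟩
    · rw [map_smul, smul_eq_mul, inv_mul_le_iff₀ hs]
      exact hy p hp
    · rwa [map_smul, smul_eq_mul, lt_inv_mul_iff₀ hs]

theorem mem_of_forall_mem_solutionSet_le {K : Set (WeakDual ℝ E × ℝ)} (hconv : Convex ℝ K)
    (hcone : ∀ l : ℝ, 0 ≤ l → ∀ p ∈ K, l • p ∈ K) (hclosed : IsClosed K)
    (he : ((0 : WeakDual ℝ E), (1 : ℝ)) ∈ K) (hK : (solutionSet K).Nonempty)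
    {c : WeakDual ℝ E} {α : ℝ} (h : ∀ x ∈ solutionSet K, c x ≤ α) : (c, α) ∈ K := by
  by_contra hcα
  have : LocallyConvexSpace ℝ (WeakDual ℝ E) := WeakBilin.locallyConvexSpace
  obtain ⟨f, u, hfc, hfK⟩ := geometric_hahn_banach_point_closed hconv hclosed hcα
  have hu : u < 0 := by simpa using hfK 0 (by simpa using hcone 0 le_rfl _ he)
  have hf_nonneg : ∀ p ∈ K, 0 ≤ f p := fun p hp => by
    by_contra! hfp
    have := hfK _ (hcone ((u - 1) / f p) (div_nonneg_of_nonpos (by linarith) hfp.le) p hp)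
    rw [map_smul, smul_eq_mul, div_mul_cancel₀ _ hfp.ne] at this
    linarith
  obtain ⟨y, hy⟩ :=
    LinearMap.dualEmbedding_surjective (topDualPairing ℝ E) (f.comp (.inl ℝ _ ℝ))
  set s := f ((0 : WeakDual ℝ E), (1 : ℝ))
  have hf (p : WeakDual ℝ E × ℝ) : f p = p.1 y + s * p.2 := by
    have hp : p = ((p.1, 0) : WeakDual ℝ E × ℝ) + p.2 • ((0 : WeakDual ℝ E), (1 : ℝ)) := by
      ext <;> simp
    have hfst : f (p.1, 0) = p.1 y := (ContinuousLinearMap.ext_iff.1 hy p.1).symm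
    calc f p = f (p.1, 0) + p.2 * s := by rw [← smul_eq_mul, ← map_smul, ← map_add, ← hp]
      _ = p.1 y + s * p.2 := by rw [hfst, mul_comm]
  obtain ⟨x, hx, hcx⟩ := exists_mem_solutionSet_lt (y := -y) (c := c) (α := α) hK
    (by simpa [s] using hf_nonneg _ he)
    (fun p hp => by linarith [map_neg p.1 y, hf_nonneg p hp, hf p])
    (by linarith [map_neg c y, hf (c, α)])
  exact (h x hx).not_gt hcx

lemma solutionSet_iUnion (U : T → Set (WeakDual ℝ E × ℝ)) :
    solutionSet (⋃ t, U t) = {x : E | ∀ t, ∀ v ∈ U t, v.1 x ≤ v.2} := by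
  ext x
  simp only [solutionSet, Set.mem_iUnion, forall_exists_index]
  exact forall_comm

lemma coe_le_infRLIP_iff {U : T → Set (WeakDual ℝ E × ℝ)} {c : WeakDual ℝ E} {a : ℝ} :
    (a : EReal) ≤ infRLIP U c ↔ ∀ x ∈ solutionSet (⋃ t, U t), a ≤ c x := by
  simp [infRLIP, solutionSet_iUnion, le_iInf_iff]

lemma exists_coe_eq_infRLIP {U : T → Set (WeakDual ℝ E × ℝ)} {c : WeakDual ℝ E}
    (hF : (solutionSet (⋃ t, U t)).Nonempty) (hc : ⊥ < infRLIP U c) :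
    ∃ m : ℝ, (m : EReal) = infRLIP U c := by
  obtain ⟨x₀, hx₀⟩ := hF
  rw [solutionSet_iUnion] at hx₀
  have hle : infRLIP U c ≤ (c x₀ : EReal) := iInf_le_of_le ⟨x₀, hx₀⟩ le_rfl
  exact ⟨_, EReal.coe_toReal (ne_top_of_le_ne_top (EReal.coe_ne_top _) hle) hc.ne'⟩

lemma neg_snd_le_infRLIP_of_mem_closure {U : T → Set (WeakDual ℝ E × ℝ)} {p : WeakDual ℝ E × ℝ}
    (hp : p ∈ closure (charCone (⋃ t, U t))) : ((-p.2 : ℝ) : EReal) ≤ infRLIP U (-p.1) := by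
  refine coe_le_infRLIP_iff.2 fun x hx => ?_
  rw [← solutionSet_charCone, ← solutionSet_closure] at hx
  simpa [WeakDual.neg_apply] using hx p hp

/-- Condition (d₆): stable robust strong duality for `(RLIP_c)`–`(RLID⁶_c)`. -/
def StableStrongDuality (U : T → Set (WeakDual ℝ E × ℝ)) : Prop :=
  ∀ c : WeakDual ℝ E, ⊥ < infRLIP U c →
    ∃ μ : (⋃ t, U t : Set (WeakDual ℝ E × ℝ)) →₀ ℝ,
      (∀ v, 0 ≤ μ v) ∧ c = -(μ.sum fun v a => a • (v : WeakDual ℝ E × ℝ).1) ∧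
      ((-(μ.sum fun v a => a * (v : WeakDual ℝ E × ℝ).2) : ℝ) : EReal) = infRLIP U c

theorem stableStrongDuality_of_isClosed_charCone {U : T → Set (WeakDual ℝ E × ℝ)}
    (hF : (solutionSet (⋃ t, U t)).Nonempty) (hclosed : IsClosed (charCone (⋃ t, U t))) :
    StableStrongDuality U := by
  intro c hc
  obtain ⟨m, hm⟩ := exists_coe_eq_infRLIP hF hc
  have hmc := coe_le_infRLIP_iff.1 hm.le
  rw [← solutionSet_charCone] at hF hmc
  have hmem : (-c, -m) ∈ charCone (⋃ t, U t) :=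
    mem_of_forall_mem_solutionSet_le (convex_convexHull ℝ _)
      (fun _ hl _ => smul_mem_convexHull_coneSet hl) hclosed
      (subset_convexHull ℝ _ ⟨1, zero_le_one, _, Or.inr rfl, (one_smul ℝ _).symm⟩) hF
      fun x hx => by simpa [WeakDual.neg_apply] using hmc x hx
  obtain ⟨μ, hμ, h1, h2⟩ := mem_charCone_iff.1 hmem
  refine ⟨μ, hμ, by rw [← h1, neg_neg], le_antisymm ?_ ?_⟩
  · have hweak : (-c, μ.sum fun v a => a * (v : WeakDual ℝ E × ℝ).2) ∈ charCone (⋃ t, U t) :=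
      mem_charCone_iff.2 ⟨μ, hμ, h1, le_rfl⟩
    simpa using neg_snd_le_infRLIP_of_mem_closure (subset_closure hweak)
  · rw [← hm]
    exact EReal.coe_le_coe_iff.2 (by linarith)

theorem isClosed_charCone_of_stableStrongDuality {U : T → Set (WeakDual ℝ E × ℝ)}
    (h : StableStrongDuality U) : IsClosed (charCone (⋃ t, U t)) := by
  refine isClosed_of_closure_subset fun p hp => ?_
  have hp_le := neg_snd_le_infRLIP_of_mem_closure hp
  obtain ⟨μ, hμ, h1, h2⟩ := h (-p.1) ((EReal.bot_lt_coe _).trans_le hp_le)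
  rw [← h2, EReal.coe_le_coe_iff] at hp_le
  exact mem_charCone_iff.2 ⟨μ, hμ, neg_injective h1, by linarith⟩

end LinearSystem

theorem stmt16_general (U : T → Set (WeakDual ℝ X × ℝ))
    (hF : {x : X | ∀ t, ∀ v ∈ U t, v.1 x ≤ v.2}.Nonempty) :
    IsClosed (convexHull ℝ
        (coneSet ((⋃ t, U t) ∪ {((0 : WeakDual ℝ X), (1 : ℝ))}))) ↔
    (∀ c : WeakDual ℝ X, ⊥ < infRLIP U c →
      ∃ μ : (⋃ t, U t : Set (WeakDual ℝ X × ℝ)) →₀ ℝ,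
        (∀ v, 0 ≤ μ v) ∧ c = -(μ.sum fun v a => a • (v : WeakDual ℝ X × ℝ).1) ∧
        ((-(μ.sum fun v a => a * (v : WeakDual ℝ X × ℝ).2) : ℝ) : EReal) = infRLIP U c) := by
  rw [← solutionSet_iUnion] at hF
  exact ⟨stableStrongDuality_of_isClosed_charCone hF, isClosed_charCone_of_stableStrongDuality⟩

/-- Theorem 4.2, case i = 6: the characteristic cone 𝒩₆ = co cone(𝒱 ∪ {(0,1)}) is closed
iff stable robust strong duality holds for the pair (RLIP_c)-(RLID⁶_c). -/
theorem stmt16 [Nonempty T] (U : T → Set (WeakDual ℝ X × ℝ)) (hU : ∀ t, (U t).Nonempty)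
    (hF : {x : X | ∀ t, ∀ v ∈ U t, v.1 x ≤ v.2}.Nonempty) :
    IsClosed (convexHull ℝ
        (coneSet ((⋃ t, U t) ∪ {((0 : WeakDual ℝ X), (1 : ℝ))}))) ↔
    (∀ c : WeakDual ℝ X, ⊥ < infRLIP U c →
      ∃ μ : (⋃ t, U t : Set (WeakDual ℝ X × ℝ)) →₀ ℝ,
        (∀ v, 0 ≤ μ v) ∧ c = -(μ.sum fun v a => a • (v : WeakDual ℝ X × ℝ).1) ∧
        ((-(μ.sum fun v a => a * (v : WeakDual ℝ X × ℝ).2) : ℝ) : EReal) = infRLIP U c) :=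
  stmt16_general U hF
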